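/- The smallest ℂ-subspace of Z that contains the six elements ρ⁺, ρ⁻, ε₁⁺, ε₁⁻, ε₂⁺, ε₃⁻ and is closed under the Zorn product equals the sextonion subspace S; i.e., the subalgebra of Z generated by {ρ⁺, ρ⁻, ε₁⁺, ε₁⁻, ε₂⁺, ε₃⁻} is exactly S. -/

import Mathlib

open Matrix

/-- 3-component complex vectors. -/
abbrev V3 := Fin 3 → ℂ

/-- The standard cross product on ℂ³. -/
def cross (A B : V3) : V3 := crossProduct A B

/-- The Zorn vector-matrix algebra over ℂ: elements x = (α⁺, A⁺, A⁻, α⁻). -/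
abbrev Zorn := ℂ × V3 × V3 × ℂ

/-- The Zorn product
x·y = (α⁺β⁺ − ⟨A⁺,B⁻⟩, α⁺B⁺ + β⁻A⁺ + A⁻×B⁻, β⁺A⁻ + α⁻B⁻ + A⁺×B⁺, α⁻β⁻ − ⟨A⁻,B⁺⟩). -/
noncomputable def zmul (x y : Zorn) : Zorn :=
  ( x.1 * y.1 - x.2.1 ⬝ᵥ y.2.2.1,
    x.1 • y.2.1 + y.2.2.2 • x.2.1 + cross x.2.2.1 y.2.2.1,
    y.1 • x.2.2.1 + x.2.2.2 • y.2.2.1 + cross x.2.1 y.2.1,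
    x.2.2.2 * y.2.2.2 - x.2.2.1 ⬝ᵥ y.2.1 )

/-- The unit 1 = (1,0,0,1) of the Zorn algebra. -/
noncomputable def zunit : Zorn := (1, 0, 0, 1)

/-- Membership in the sextonion subspace S : A⁺₃ = 0 and A⁻₂ = 0. -/
def inS (x : Zorn) : Prop := x.2.1 2 = 0 ∧ x.2.2.1 1 = 0

/-- The sextonion subspace S as a ℂ-submodule of the Zorn algebra. -/
noncomputable def Ssub : Submodule ℂ Zorn where
  carrier := {x | inS x}
  add_mem' := by
    rintro x y ⟨hx1, hx2⟩ ⟨hy1, hy2⟩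
    exact ⟨by simp [inS, Prod.fst_add, Prod.snd_add, Pi.add_apply, hx1, hy1],
           by simp [inS, Prod.fst_add, Prod.snd_add, Pi.add_apply, hx2, hy2]⟩
  zero_mem' := ⟨rfl, rfl⟩
  smul_mem' := by
    rintro c x ⟨hx1, hx2⟩
    exact ⟨by simp [inS, Prod.smul_fst, Prod.smul_snd, Pi.smul_apply, hx1],
           by simp [inS, Prod.smul_fst, Prod.smul_snd, Pi.smul_apply, hx2]⟩

/-- ρ⁺ = (1,0,0,0). -/
noncomputable def rhoP : Zorn := (1, 0, 0, 0)
/-- ρ⁻ = (0,0,0,1). -/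
noncomputable def rhoM : Zorn := (0, 0, 0, 1)
/-- ε_k⁺ = (0, e_k, 0, 0). -/
noncomputable def epsP (k : Fin 3) : Zorn := (0, Pi.single k 1, 0, 0)
/-- ε_k⁻ = (0, 0, e_k, 0). -/
noncomputable def epsM (k : Fin 3) : Zorn := (0, 0, Pi.single k 1, 0)

/-- The six generators ρ⁺, ρ⁻, ε₁⁺, ε₁⁻, ε₂⁺, ε₃⁻. -/
noncomputable def sexGens : Set Zorn := {rhoP, rhoM, epsP 0, epsM 0, epsP 1, epsM 2}

/-!
The six generators are the standard basis vectors of `S`, so `S` is already their linear span and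
any subspace containing them contains `S`. Closure of `S` under the product comes down to two
coordinates of cross products: `(A⁻ × B⁻)₃ = A⁻₁B⁻₂ - A⁻₂B⁻₁` and `(A⁺ × B⁺)₂ = A⁺₃B⁺₁ - A⁺₁B⁺₃`,
which vanish when `A⁻₂ = B⁻₂ = 0` and `A⁺₃ = B⁺₃ = 0`.
-/

lemma sexGens_subset_Ssub : sexGens ⊆ (Ssub : Set Zorn) := by
  rintro x (rfl | rfl | rfl | rfl | rfl | rfl) <;>
    exact ⟨by simp [rhoP, rhoM, epsP, epsM], by simp [rhoP, rhoM, epsP, epsM]⟩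

lemma zmul_mem_Ssub {x y : Zorn} (hx : x ∈ Ssub) (hy : y ∈ Ssub) : zmul x y ∈ Ssub := by
  obtain ⟨hx₁, hx₂⟩ := hx
  obtain ⟨hy₁, hy₂⟩ := hy
  constructor
  · show (x.1 • y.2.1 + y.2.2.2 • x.2.1 + cross x.2.2.1 y.2.2.1) 2 = 0
    simp [cross, crossProduct, hx₁, hy₁, hx₂, hy₂]
  · show (y.1 • x.2.2.1 + x.2.2.2 • y.2.2.1 + cross x.2.1 y.2.1) 1 = 0
    simp [cross, crossProduct, hx₁, hy₁, hx₂, hy₂]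

lemma eq_sexGens_combination_of_mem_Ssub {x : Zorn} (hx : x ∈ Ssub) :
    x = x.1 • rhoP + x.2.1 0 • epsP 0 + x.2.1 1 • epsP 1 +
      x.2.2.1 0 • epsM 0 + x.2.2.1 2 • epsM 2 + x.2.2.2 • rhoM := by
  obtain ⟨hx₁, hx₂⟩ := hx
  refine Prod.ext ?_ (Prod.ext ?_ (Prod.ext ?_ ?_))
  · simp [rhoP, rhoM, epsP, epsM]
  · funext i
    fin_cases i <;> simp [rhoP, rhoM, epsP, epsM, hx₁]
  · funext i
    fin_cases i <;> simp [rhoP, rhoM, epsP, epsM, hx₂]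
  · simp [rhoP, rhoM, epsP, epsM]

lemma Ssub_le_span_sexGens : Ssub ≤ Submodule.span ℂ sexGens := by
  intro x hx
  rw [eq_sexGens_combination_of_mem_Ssub hx]
  refine add_mem (add_mem (add_mem (add_mem (add_mem ?_ ?_) ?_) ?_) ?_) ?_ <;>
    exact Submodule.smul_mem _ _ (Submodule.subset_span (by simp [sexGens]))

lemma Ssub_eq_span_sexGens : Ssub = Submodule.span ℂ sexGens :=
  le_antisymm Ssub_le_span_sexGens (Submodule.span_le.mpr sexGens_subset_Ssub)

/-- the smallest ℂ-subspace of Z containing ρ⁺, ρ⁻, ε₁⁺, ε₁⁻, ε₂⁺, ε₃⁻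
and closed under the Zorn product is exactly the sextonion subspace S. -/
theorem sextonions_generated :
    sexGens ⊆ (Ssub : Set Zorn) ∧
    (∀ x ∈ Ssub, ∀ y ∈ Ssub, zmul x y ∈ Ssub) ∧
    (∀ W : Submodule ℂ Zorn, sexGens ⊆ (W : Set Zorn) →
      (∀ x ∈ W, ∀ y ∈ W, zmul x y ∈ W) → Ssub ≤ W) :=
  ⟨sexGens_subset_Ssub, fun _ hx _ hy => zmul_mem_Ssub hx hy,
    fun _ hW _ => Ssub_eq_span_sexGens ▸ Submodule.span_le.mpr hW⟩
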